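/- Let 0 < q ≤ 1, let x₀ ∈ ℝⁿ be s-sparse with support S, and let h ∈ ℝⁿ be such that x₀ + h ≠ 0 and x₀ ≠ 0. Then ‖x₀ + h‖_q^q / ‖x₀ + h‖₂^q ≥ (‖x₀‖_q^q + ‖h_{Sᶜ}‖_q^q − ‖h_S‖_q^q) / (‖x₀‖₂^q + ‖h‖₂^q), where h_S denotes the restriction of h to S (zero elsewhere). -/

import Mathlib

open Finset Real

/-!
On the support `S` of `x₀` the `q`-triangle inequality gives
`|x₀ i|^q ≤ |x₀ i + h i|^q + |h i|^q`, while off `S` we have `x₀ + h = h`; summing, the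
numerator of the right-hand side is at most `‖x₀ + h‖_q^q`. Minkowski's inequality followed by
the subadditivity of `y ↦ y^q` shows that its denominator is at least `‖x₀ + h‖₂^q`.
-/

lemma Real.abs_add_rpow_le {q : ℝ} (hq0 : 0 ≤ q) (hq1 : q ≤ 1) (a b : ℝ) :
    |a + b| ^ q ≤ |a| ^ q + |b| ^ q :=
  (rpow_le_rpow (abs_nonneg _) (abs_add_le a b) hq0).trans
    (rpow_add_le_add_rpow (abs_nonneg _) (abs_nonneg _) hq0 hq1)

section
variable {ι : Type*} [Fintype ι]

lemma sum_abs_rpow_add_compl_sub_le [DecidableEq ι] {q : ℝ} (hq0 : 0 < q) (hq1 : q ≤ 1)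
    {x : ι → ℝ} {S : Finset ι} (hx : ∀ i ∉ S, x i = 0) (h : ι → ℝ) :
    (∑ i, |x i| ^ q) + (∑ i ∈ Sᶜ, |h i| ^ q) - ∑ i ∈ S, |h i| ^ q
      ≤ ∑ i, |x i + h i| ^ q := by
  have hx_sum : ∑ i, |x i| ^ q = ∑ i ∈ S, |x i| ^ q :=
    (sum_subset (subset_univ S) fun i _ hi => by
      rw [hx i hi, abs_zero, zero_rpow hq0.ne']).symm
  have hcompl : ∑ i ∈ Sᶜ, |x i + h i| ^ q = ∑ i ∈ Sᶜ, |h i| ^ q :=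
    sum_congr rfl fun i hi => by rw [hx i (mem_compl.mp hi), zero_add]
  have hS : ∑ i ∈ S, |x i| ^ q ≤ ∑ i ∈ S, |x i + h i| ^ q + ∑ i ∈ S, |h i| ^ q := by
    rw [← sum_add_distrib]
    refine sum_le_sum fun i _ => ?_
    simpa using abs_add_rpow_le hq0.le hq1 (x i + h i) (-h i)
  rw [hx_sum, ← sum_add_sum_compl S, hcompl]
  linarith

lemma sqrt_sum_sq_add_le (x y : ι → ℝ) :
    √(∑ i, (x i + y i) ^ 2) ≤ √(∑ i, x i ^ 2) + √(∑ i, y i ^ 2) := by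
  simpa [EuclideanSpace.norm_eq, sq_abs] using
    norm_add_le (WithLp.toLp 2 x : EuclideanSpace ℝ ι) (WithLp.toLp 2 y)

lemma sqrt_sum_sq_add_rpow_le {q : ℝ} (hq0 : 0 ≤ q) (hq1 : q ≤ 1) (x y : ι → ℝ) :
    √(∑ i, (x i + y i) ^ 2) ^ q ≤ √(∑ i, x i ^ 2) ^ q + √(∑ i, y i ^ 2) ^ q :=
  (rpow_le_rpow (sqrt_nonneg _) (sqrt_sum_sq_add_le x y) hq0).trans
    (rpow_add_le_add_rpow (sqrt_nonneg _) (sqrt_nonneg _) hq0 hq1)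

lemma sqrt_sum_sq_pos {x : ι → ℝ} (hx : x ≠ 0) : 0 < √(∑ i, x i ^ 2) := by
  obtain ⟨i, hi⟩ := Function.ne_iff.mp hx
  exact sqrt_pos.mpr <| sum_pos' (fun j _ => sq_nonneg (x j)) ⟨i, mem_univ i, sq_pos_of_ne_zero hi⟩

end

theorem stmt_4_general (n : ℕ) (q : ℝ) (hq0 : 0 < q) (hq1 : q ≤ 1)
    (x₀ h : Fin n → ℝ) (S : Finset (Fin n))
    (hS : ∀ i, x₀ i ≠ 0 ↔ i ∈ S) (hxh : x₀ + h ≠ 0) :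
    (∑ i, |x₀ i + h i| ^ q) / (Real.sqrt (∑ i, (x₀ i + h i) ^ 2)) ^ q
      ≥ ((∑ i, |x₀ i| ^ q) + (∑ i ∈ Sᶜ, |h i| ^ q) - ∑ i ∈ S, |h i| ^ q)
          / ((Real.sqrt (∑ i, (x₀ i) ^ 2)) ^ q + (Real.sqrt (∑ i, (h i) ^ 2)) ^ q) := by
  have hx₀ : ∀ i ∉ S, x₀ i = 0 := fun i hi => not_not.mp (mt (hS i).mp hi)
  have hden_pos : 0 < √(∑ i, (x₀ i + h i) ^ 2) ^ q :=
    rpow_pos_of_pos (sqrt_sum_sq_pos (x := x₀ + h) hxh) q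
  exact div_le_div₀ (sum_nonneg fun i _ => rpow_nonneg (abs_nonneg _) q)
    (sum_abs_rpow_add_compl_sub_le hq0 hq1 hx₀ h) hden_pos
    (sqrt_sum_sq_add_rpow_le hq0.le hq1 x₀ h)

theorem stmt_4 (n s : ℕ) (q : ℝ) (hq0 : 0 < q) (hq1 : q ≤ 1)
    (x₀ h : Fin n → ℝ) (S : Finset (Fin n))
    (hS : ∀ i, x₀ i ≠ 0 ↔ i ∈ S) (hcard : S.card ≤ s)
    (hx₀ : x₀ ≠ 0) (hxh : x₀ + h ≠ 0) :
    (∑ i, |x₀ i + h i| ^ q) / (Real.sqrt (∑ i, (x₀ i + h i) ^ 2)) ^ q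
      ≥ ((∑ i, |x₀ i| ^ q) + (∑ i ∈ Sᶜ, |h i| ^ q) - ∑ i ∈ S, |h i| ^ q)
          / ((Real.sqrt (∑ i, (x₀ i) ^ 2)) ^ q + (Real.sqrt (∑ i, (h i) ^ 2)) ^ q) :=
  stmt_4_general n q hq0 hq1 x₀ h S hS hxh
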